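/- Each of the three elementary necklaces b satisfies max_{r∈ℛ₂(b)} ω(r) = 1, i.e. its bubble dimension is d̃_b = 1. -/

import Mathlib

/-!  Rank-4 tensorial bubbles and Feynman graphs, following
Carrozza–Lahoche–Oriti, "Renormalizable Group Field Theory beyond melonic
diagrams: an example in rank four". -/

open Finset

/-- A rank-4 bubble: a connected bipartite 4-colored regular graph, given by
finite sets of black and white nodes together with, for each color, a perfect
matching (bijection) between black and white nodes. -/
structure Bubble where
  B : Type
  W : Type
  [fB : Fintype B]
  [fW : Fintype W]
  [dB : DecidableEq B]
  [dW : DecidableEq W]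
  /-- for each color `i`, the perfect matching of color `i` -/
  edge : Fin 4 → B ≃ W
  /-- connectedness: the only subsets of nodes closed under colored adjacency
  are `∅` and `univ` -/
  conn : ∀ S : Finset (B ⊕ W),
    (∀ x ∈ S, ∀ y : B ⊕ W,
      (∃ i : Fin 4, (∃ u : B, x = Sum.inl u ∧ y = Sum.inr (edge i u)) ∨
        (∃ u : B, y = Sum.inl u ∧ x = Sum.inr (edge i u))) → y ∈ S) →
    S = ∅ ∨ S = Finset.univ

attribute [instance] Bubble.fB Bubble.fW Bubble.dB Bubble.dW

/-- The valency of a bubble: its total number of nodes. -/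
def Bubble.valency (b : Bubble) : ℕ := Fintype.card b.B + Fintype.card b.W

/-- Isomorphism of bubbles (color-preserving). -/
def Bubble.Iso (b b' : Bubble) : Prop :=
  ∃ (eB : b.B ≃ b'.B) (eW : b.W ≃ b'.W), ∀ (i : Fin 4) (x : b.B),
    eW (b.edge i x) = b'.edge i (eB x)

/-- The elementary 2-valent bubble. -/
def twoValent : Bubble where
  B := PUnit
  W := PUnit
  edge := fun _ => Equiv.refl PUnit
  conn := by
    intro S hS
    rcases S.eq_empty_or_nonempty with h | ⟨x, hx⟩
    · exact Or.inl h
    · right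
      have hadj : ∀ x ∈ S, ∀ y : PUnit.{1} ⊕ PUnit.{1}, (∃ i : Fin 4, (∃ u : PUnit.{1}, x = Sum.inl u ∧ y = Sum.inr (Equiv.refl PUnit u)) ∨
        (∃ u : PUnit.{1}, y = Sum.inl u ∧ x = Sum.inr (Equiv.refl PUnit u))) → y ∈ S := hS
      have hi : Sum.inl PUnit.unit ∈ S ∧ Sum.inr PUnit.unit ∈ S := by
        rcases x with ⟨⟩ | ⟨⟩
        · exact ⟨hx, hadj _ hx _ ⟨0, Or.inl ⟨PUnit.unit, rfl, rfl⟩⟩⟩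
        · exact ⟨hadj _ hx _ ⟨0, Or.inr ⟨PUnit.unit, rfl, rfl⟩⟩, hx⟩
      ext y
      rcases y with ⟨⟩ | ⟨⟩ <;> simp [hi.1, hi.2]

/-- The elementary necklace in which color `1` (index `0`) is paired with the
color of index `ℓ.succ`, `ℓ : Fin 3`: its four nodes form a 4-cycle along which
double lines with the colors `{0, ℓ.succ}` alternate with double lines carrying
the complementary pair of colors. -/
def elemNecklace (ℓ : Fin 3) : Bubble where
  B := Fin 2
  W := Fin 2
  edge := fun c => if c = 0 ∨ c = ℓ.succ then Equiv.refl (Fin 2) else Equiv.swap 0 1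
  conn := by fin_cases ℓ <;> decide

/-- The 4-valent melonic bubble of color `ℓ`. -/
def melon4 (ℓ : Fin 4) : Bubble where
  B := Fin 2
  W := Fin 2
  edge := fun c => if c = ℓ then Equiv.swap 0 1 else Equiv.refl (Fin 2)
  conn := by fin_cases ℓ <;> decide

/-- The colored matchings of the connected sum of `b₁` and `b₂` at a black node
`n₁` of `b₁` and a white node `n₂` of `b₂`: delete `n₁, n₂` and join the
dangling colored half-lines according to their colors. -/
def connSumEdge (b₁ b₂ : Bubble) (n₁ : b₁.B) (n₂ : b₂.W) (i : Fin 4) :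
    ({x : b₁.B // x ≠ n₁} ⊕ b₂.B) → (b₁.W ⊕ {y : b₂.W // y ≠ n₂})
  | Sum.inl x => Sum.inl (b₁.edge i x.1)
  | Sum.inr y =>
      if h : b₂.edge i y = n₂ then Sum.inl (b₁.edge i n₁)
      else Sum.inr ⟨b₂.edge i y, h⟩

/-- `b₃` is the connected sum of `b₁` and `b₂` at `n₁` and `n₂`. -/
def IsConnSumAt (b₃ b₁ b₂ : Bubble) (n₁ : b₁.B) (n₂ : b₂.W) : Prop :=
  ∃ (eB : b₃.B ≃ ({x : b₁.B // x ≠ n₁} ⊕ b₂.B))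
    (eW : b₃.W ≃ (b₁.W ⊕ {y : b₂.W // y ≠ n₂})),
    ∀ (i : Fin 4) (x : b₃.B), eW (b₃.edge i x) = connSumEdge b₁ b₂ n₁ n₂ i (eB x)

/-- The set `𝔹` of necklace bubbles: the 2-valent bubble together with
everything generated by the three elementary necklaces under connected sums. -/
inductive IsNecklace : Bubble → Prop
  | two {b : Bubble} : b.Iso twoValent → IsNecklace b
  | elem {b : Bubble} (ℓ : Fin 3) : b.Iso (elemNecklace ℓ) → IsNecklace b
  | sum {b b₁ b₂ : Bubble} (n₁ : b₁.B) (n₂ : b₂.W) :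
      IsNecklace b₁ → IsNecklace b₂ → IsConnSumAt b b₁ b₂ n₁ n₂ → IsNecklace b

/-- `(n, m)` is a `k`-dipole of the bubble `b`: `n` and `m` are joined by
exactly `k` colored lines. -/
def Bubble.IsDipole (b : Bubble) (n : b.B) (m : b.W) (k : ℕ) : Prop :=
  (Finset.univ.filter fun i : Fin 4 => b.edge i n = m).card = k

/-- The colored matchings of the bubble obtained from `b` by contracting the
pair of nodes `(n, m)`: delete `n`, `m` and all colored lines between them, and
reconnect the dangling colored half-lines according to their colors. -/
def contractEdge (b : Bubble) (n : b.B) (m : b.W) (i : Fin 4)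
    (x : {x : b.B // x ≠ n}) : {y : b.W // y ≠ m} :=
  if h : b.edge i x.1 = m then
    ⟨b.edge i n, fun hm => x.2 ((b.edge i).injective (h.trans hm.symm))⟩
  else ⟨b.edge i x.1, h⟩

/-- `b'` is the bubble obtained from `b` by contracting the dipole `(n, m)`. -/
def Bubble.IsContractionAt (b' b : Bubble) (n : b.B) (m : b.W) : Prop :=
  ∃ (eB : b'.B ≃ {x : b.B // x ≠ n}) (eW : b'.W ≃ {y : b.W // y ≠ m}),
    ∀ (i : Fin 4) (x : b'.B), eW (b'.edge i x) = contractEdge b n m i (eB x)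

/-- A Feynman graph: a finite collection of bubbles (the vertices) together
with 0-lines, each joining a black node to a white node, every node being
incident to at most one 0-line. Nodes not incident to a 0-line carry external
legs. -/
structure FGraph where
  V : Type
  [fV : Fintype V]
  [dV : DecidableEq V]
  bub : V → Bubble
  L : Type
  [fL : Fintype L]
  [dL : DecidableEq L]
  /-- the black endpoint of a 0-line -/
  lb : L → Σ v : V, (bub v).B
  /-- the white endpoint of a 0-line -/
  lw : L → Σ v : V, (bub v).W
  lb_inj : Function.Injective lb
  lw_inj : Function.Injective lw

attribute [instance] FGraph.fV FGraph.dV FGraph.fL FGraph.dL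

/-- The black nodes of a Feynman graph. -/
abbrev FGraph.NB (G : FGraph) : Type := Σ v : G.V, (G.bub v).B

/-- The white nodes of a Feynman graph. -/
abbrev FGraph.NW (G : FGraph) : Type := Σ v : G.V, (G.bub v).W

/-- The colored line of color `i` leaving the black node `x`. -/
def FGraph.colorMap (G : FGraph) (i : Fin 4) (x : G.NB) : G.NW :=
  ⟨x.1, (G.bub x.1).edge i x.2⟩

/-- `L(𝒢)`: the number of 0-lines. -/
def FGraph.numL (G : FGraph) : ℕ := Fintype.card G.L

/-- `V(𝒢)`: the number of vertices (bubbles). -/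
def FGraph.numV (G : FGraph) : ℕ := Fintype.card G.V

/-- `N(𝒢)`: the number of external legs. -/
def FGraph.numN (G : FGraph) : ℕ :=
  (Fintype.card G.NB - Fintype.card G.L) + (Fintype.card G.NW - Fintype.card G.L)

/-- `l'` is the successor of `l` in the face of color `i`: the white endpoint
of `l'` is joined by a color-`i` line to the black endpoint of `l`. -/
def FGraph.NextRel (G : FGraph) (i : Fin 4) (l l' : G.L) : Prop :=
  G.lw l' = G.colorMap i (G.lb l)

/-- `C` is (the set of 0-lines of) an internal face of color `i`: a cycle of
the successor relation, i.e. a minimal nonempty set in which every 0-line has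
its successor. -/
def FGraph.IsFace (G : FGraph) (i : Fin 4) (C : Finset G.L) : Prop :=
  C.Nonempty ∧ (∀ l ∈ C, ∃ l' ∈ C, G.NextRel i l l') ∧
    ∀ D : Finset G.L, D ⊆ C → D.Nonempty →
      (∀ l ∈ D, ∃ l' ∈ D, G.NextRel i l l') → D = C

/-- `F(𝒢)`: the number of internal faces. -/
noncomputable def FGraph.numF (G : FGraph) : ℕ :=
  Set.ncard {p : Fin 4 × Finset G.L | G.IsFace p.1 p.2}

open Classical in
/-- The line/face incidence matrix `ε`, with internal faces coherently oriented
so that every 0-line occurs in a face it belongs to with matching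
orientation. -/
noncomputable def FGraph.epsMat (G : FGraph) :
    Matrix G.L (Fin 4 × Finset G.L) ℚ :=
  fun l p => if G.IsFace p.1 p.2 ∧ l ∈ p.2 then 1 else 0

/-- `R(𝒢)`: the rank of the incidence matrix `ε` over `ℚ`. -/
noncomputable def FGraph.numR (G : FGraph) : ℕ := G.epsMat.rank

/-- The Abelian degree of divergence `ω(𝒢) = -2L + 3(F - R)`. -/
noncomputable def FGraph.omega (G : FGraph) : ℤ :=
  -2 * (G.numL : ℤ) + 3 * ((G.numF : ℤ) - (G.numR : ℤ))

/-- `ρ(𝒢) = (L - V + 1) - (F - R)`. -/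
noncomputable def FGraph.rho (G : FGraph) : ℤ :=
  ((G.numL : ℤ) - (G.numV : ℤ) + 1) - ((G.numF : ℤ) - (G.numR : ℤ))

/-- Adjacency of the vertices `a, b` through a 0-line belonging to `T`. -/
def FGraph.VAdjOn (G : FGraph) (T : Finset G.L) (a b : G.V) : Prop :=
  ∃ l ∈ T, ((G.lb l).1 = a ∧ (G.lw l).1 = b) ∨ ((G.lb l).1 = b ∧ (G.lw l).1 = a)

/-- Adjacency of the vertices `a, b` through some 0-line. -/
def FGraph.VAdj (G : FGraph) (a b : G.V) : Prop :=
  ∃ l : G.L, ((G.lb l).1 = a ∧ (G.lw l).1 = b) ∨ ((G.lb l).1 = b ∧ (G.lw l).1 = a)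

/-- Connectedness of a Feynman graph. -/
def FGraph.Connected (G : FGraph) : Prop :=
  Nonempty G.V ∧ ∀ v v' : G.V, Relation.ReflTransGen G.VAdj v v'

/-- `T` is a spanning tree of 0-lines of `𝒢`. -/
def FGraph.IsSpanningTree (G : FGraph) (T : Finset G.L) : Prop :=
  T.card + 1 = Fintype.card G.V ∧
    ∀ v v' : G.V, Relation.ReflTransGen (G.VAdjOn T) v v'

/-- Rerouting of a color-`i` half-line through the contracted lines `T`:
as long as the reached white node is an endpoint of a contracted line, jump to
the color-`i` line leaving the black endpoint of that contracted line. -/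
noncomputable def FGraph.reroute (G : FGraph) (T : Finset G.L) (i : Fin 4) :
    ℕ → G.NW → G.NW
  | 0, w => w
  | fuel + 1, w =>
      if h : ∃ l ∈ T, G.lw l = w then
        G.reroute T i fuel (G.colorMap i (G.lb h.choose))
      else w

/-- `G'` is the Feynman graph obtained from `G` by contracting all the 0-lines
of `T` (deleting their end nodes and the colored lines between them, and
reconnecting the dangling colored half-lines by colors). -/
def FGraph.IsQuotientBy (G' G : FGraph) (T : Finset G.L) : Prop :=
  ∃ (eL : G'.L ≃ {l : G.L // l ∉ T})
    (eB : G'.NB ≃ {x : G.NB // ∀ l ∈ T, G.lb l ≠ x})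
    (eW : G'.NW ≃ {y : G.NW // ∀ l ∈ T, G.lw l ≠ y}),
    (∀ l' : G'.L,
      (eB (G'.lb l')).1 = G.lb (eL l').1 ∧ (eW (G'.lw l')).1 = G.lw (eL l').1) ∧
    ∀ (i : Fin 4) (x : G'.NB),
      (eW (G'.colorMap i x)).1 = G.reroute T i T.card (G.colorMap i (eB x).1)

/-- `G'` is the Feynman graph obtained from `G` by contracting the 0-line `l`. -/
def FGraph.IsContractionAt (G' G : FGraph) (l : G.L) : Prop :=
  FGraph.IsQuotientBy G' G {l}

/-- The 0-line `l` is a `k`-dipole: its two end nodes are joined by exactly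
`k - 1` colored lines. -/
def FGraph.IsDipoleLine (G : FGraph) (l : G.L) (k : ℕ) : Prop :=
  (Finset.univ.filter fun i : Fin 4 => G.colorMap i (G.lb l) = G.lw l).card = k - 1

/-- A Feynman graph is 3-dipole contractible if its 0-lines can be contracted
one after the other, each being a 3-dipole at the moment of its contraction. -/
inductive DipoleContractible : FGraph → Prop
  | nil {G : FGraph} : Fintype.card G.L = 0 → DipoleContractible G
  | step {G G' : FGraph} (l : G.L) : G.IsDipoleLine l 3 →
      FGraph.IsContractionAt G' G l → DipoleContractible G' → DipoleContractible G

/-- A necklace graph: a connected Feynman graph all of whose vertices are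
necklace bubbles. -/
def FGraph.IsNecklaceGraph (G : FGraph) : Prop :=
  G.Connected ∧ ∀ v : G.V, IsNecklace (G.bub v)

/-- `r ∈ ℛ₂(b)`: a Feynman graph with a single vertex `b` and exactly two
external legs. -/
def IsR2 (r : FGraph) (b : Bubble) : Prop :=
  Fintype.card r.V = 1 ∧ (∀ v : r.V, (r.bub v).Iso b) ∧ r.numN = 2

/-- `M = max_{r ∈ ℛ₂(b)} ω(r)`. -/
def IsMaxOmega2 (b : Bubble) (M : ℤ) : Prop :=
  (∃ r : FGraph, IsR2 r b ∧ r.omega = M) ∧ ∀ r : FGraph, IsR2 r b → r.omega ≤ M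

/-- The bubble dimension `d̃_b = 2 - max_{r ∈ ℛ₂(b)} ω(r)`. -/
def HasBubbleDim (b : Bubble) (d : ℤ) : Prop :=
  ∃ M : ℤ, IsMaxOmega2 b M ∧ d = 2 - M

open Classical in
/-- The (unique, if any) successor of the 0-line `l` in the face of color `i`. -/
noncomputable def FGraph.nextL (G : FGraph) (i : Fin 4) (l : G.L) : Option G.L :=
  if h : ∃ l' : G.L, G.NextRel i l l' then some h.choose else none

/-- The ordered product of the group elements attached to the `k` consecutive
0-lines of the face of color `i` starting at `l`. -/
noncomputable def FGraph.holPath (G : FGraph) {Γ : Type*} [Monoid Γ]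
    (h : G.L → Γ) (i : Fin 4) : ℕ → G.L → Γ
  | 0, _ => 1
  | k + 1, l => h l * (G.nextL i l).elim 1 (fun l' => FGraph.holPath G h i k l')


/-! A two-point graph on a bubble with two black nodes has a single 0-line, and that line
closes an internal face for each color joining its two endpoints. In an elementary necklace
every black node is joined to every white node by exactly two colors, so `F = 2`, `R = 1`
and `ω = -2 + 3 (2 - 1) = 1`. -/

lemma Matrix.rank_pos_of_ne_zero {m n K : Type*} [Fintype m] [Fintype n] [Field K]
    {A : Matrix m n K} (hA : A ≠ 0) : 0 < A.rank := by
  rw [Matrix.rank_eq_finrank_span_cols, Nat.pos_iff_ne_zero, Ne, Submodule.finrank_eq_zero,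
    Submodule.span_eq_bot]
  refine fun h => hA (Matrix.ext fun i j => ?_)
  exact congrFun (h (A.col j) ⟨j, rfl⟩) i

lemma elemNecklace_card_colors (ℓ : Fin 3) (n : (elemNecklace ℓ).B) (m : (elemNecklace ℓ).W) :
    #{i | (elemNecklace ℓ).edge i n = m} = 2 := by
  fin_cases ℓ <;> fin_cases n <;> fin_cases m <;> decide

lemma Fintype.card_sigma_of_card_eq_one {α : Type*} {β : α → Type*} [Fintype α]
    [∀ a, Fintype (β a)] (hα : Fintype.card α = 1) {k : ℕ} (hβ : ∀ a, Fintype.card (β a) = k) :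
    Fintype.card (Σ a, β a) = k := by
  rw [Fintype.card_sigma, Finset.sum_congr rfl fun a _ => hβ a, Finset.sum_const,
    Finset.card_univ, hα, one_smul]

lemma Bubble.card_W (b : Bubble) : Fintype.card b.W = Fintype.card b.B :=
  (Fintype.card_congr (b.edge 0)).symm

namespace FGraph

instance (G : FGraph) (i : Fin 4) : DecidableRel (G.NextRel i) :=
  fun _ _ => inferInstanceAs (Decidable (_ = _))

section SingleLine

variable {G : FGraph} {l₀ : G.L} (hl₀ : ∀ l, l = l₀)
include hl₀

lemma isFace_iff_of_forall_eq {i : Fin 4} {C : Finset G.L} :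
    G.IsFace i C ↔ C = {l₀} ∧ G.NextRel i l₀ l₀ := by
  have hsingle : ∀ D : Finset G.L, D.Nonempty → D = {l₀} := fun D ⟨x, hx⟩ =>
    eq_singleton_iff_unique_mem.mpr ⟨hl₀ x ▸ hx, fun y _ => hl₀ y⟩
  constructor
  · rintro ⟨hne, hstep, -⟩
    obtain rfl := hsingle C hne
    obtain ⟨l', -, h⟩ := hstep l₀ (mem_singleton_self _)
    exact ⟨rfl, hl₀ l' ▸ h⟩
  · rintro ⟨rfl, h⟩
    exact ⟨singleton_nonempty _, fun l hl => ⟨l₀, mem_singleton_self _, mem_singleton.mp hl ▸ h⟩,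
      fun D _ hD _ => hsingle D hD⟩

lemma numF_of_forall_eq : G.numF = #{i | G.NextRel i l₀ l₀} := by
  have hfaces : {p : Fin 4 × Finset G.L | G.IsFace p.1 p.2} =
      ↑((({i | G.NextRel i l₀ l₀} : Finset (Fin 4)).image fun i => (i, ({l₀} : Finset G.L))) :
        Finset (Fin 4 × Finset G.L)) := by
    ext ⟨i, C⟩
    simp [isFace_iff_of_forall_eq hl₀, and_comm, eq_comm]
  rw [numF, hfaces, Set.ncard_coe_finset, card_image_of_injective _ fun i j h => congrArg Prod.fst h]

lemma numR_of_forall_eq {c : Fin 4} (hc : G.NextRel c l₀ l₀) : G.numR = 1 := by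
  have hface : G.IsFace c {l₀} := (isFace_iff_of_forall_eq hl₀).mpr ⟨rfl, hc⟩
  have hentry : G.epsMat l₀ (c, {l₀}) = 1 := if_pos ⟨hface, mem_singleton_self _⟩
  have hne : G.epsMat ≠ 0 := fun h => by simp [h] at hentry
  have hle : G.epsMat.rank ≤ 1 :=
    (Matrix.rank_le_card_height _).trans (Fintype.card_eq_one_iff.mpr ⟨l₀, hl₀⟩).le
  exact le_antisymm hle (Matrix.rank_pos_of_ne_zero hne)

lemma omega_of_forall_eq {c : Fin 4} (hc : G.NextRel c l₀ l₀) :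
    G.omega = 3 * #{i | G.NextRel i l₀ l₀} - 5 := by
  rw [omega, numL, Fintype.card_eq_one_iff.mpr ⟨l₀, hl₀⟩, numR_of_forall_eq hl₀ hc,
    numF_of_forall_eq hl₀]
  ring

end SingleLine

end FGraph

namespace IsR2

variable {r : FGraph} {b : Bubble}

lemma card_NB (hr : IsR2 r b) : Fintype.card r.NB = Fintype.card b.B :=
  Fintype.card_sigma_of_card_eq_one hr.1 fun v => by
    obtain ⟨eB, -, -⟩ := hr.2.1 v
    exact Fintype.card_congr eB

lemma card_NW (hr : IsR2 r b) : Fintype.card r.NW = Fintype.card b.B :=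
  Fintype.card_sigma_of_card_eq_one hr.1 fun v => by
    obtain ⟨-, eW, -⟩ := hr.2.1 v
    exact (Fintype.card_congr eW).trans b.card_W

lemma card_L_add_one (hr : IsR2 r b) : Fintype.card r.L + 1 = Fintype.card b.B := by
  have hle := Fintype.card_le_of_injective _ r.lb_inj
  have hN := hr.2.2
  rw [FGraph.numN, hr.card_NB, hr.card_NW] at hN
  rw [hr.card_NB] at hle
  omega

lemma exists_nextRel_iff (hr : IsR2 r b) (l : r.L) :
    ∃ (n : b.B) (m : b.W), ∀ i, r.NextRel i l l ↔ b.edge i n = m := by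
  obtain ⟨hV, hbub, -⟩ := hr
  have : Subsingleton r.V := Fintype.card_le_one_iff_subsingleton.mp hV.le
  rcases hb : r.lb l with ⟨v, n⟩
  rcases hw : r.lw l with ⟨v', m⟩
  obtain rfl : v' = v := Subsingleton.elim _ _
  obtain ⟨eB, eW, he⟩ := hbub v'
  refine ⟨eB n, eW m, fun i => ?_⟩
  rw [← he, eW.injective.eq_iff, FGraph.NextRel, FGraph.colorMap, hb, hw]
  simp [eq_comm]

lemma omega_eq_one_of_elemNecklace {ℓ : Fin 3} (hr : IsR2 r (elemNecklace ℓ)) : r.omega = 1 := by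
  obtain ⟨l₀, hl₀⟩ := Fintype.card_eq_one_iff.mp (Nat.succ_injective hr.card_L_add_one)
  obtain ⟨n, m, hnm⟩ := hr.exists_nextRel_iff l₀
  have hcolors : #{i | r.NextRel i l₀ l₀} = 2 := by
    simpa only [hnm] using elemNecklace_card_colors ℓ n m
  obtain ⟨i, -, hi⟩ := filter_nonempty_iff.mp (card_pos.mp (hcolors.symm ▸ two_pos))
  rw [FGraph.omega_of_forall_eq hl₀ hi, hcolors]
  norm_num

end IsR2

def Bubble.oneLineGraph (b : Bubble) (n : b.B) (m : b.W) : FGraph where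
  V := PUnit
  bub := fun _ => b
  L := PUnit
  lb := fun _ => ⟨PUnit.unit, n⟩
  lw := fun _ => ⟨PUnit.unit, m⟩
  lb_inj := Function.injective_of_subsingleton _
  lw_inj := Function.injective_of_subsingleton _

lemma Bubble.isR2_oneLineGraph {b : Bubble} (hb : Fintype.card b.B = 2) (n : b.B) (m : b.W) :
    IsR2 (b.oneLineGraph n m) b := by
  refine ⟨rfl, fun _ => ⟨Equiv.refl _, Equiv.refl _, fun _ _ => rfl⟩, ?_⟩
  show (Fintype.card (Σ _ : PUnit, b.B) - 1) + (Fintype.card (Σ _ : PUnit, b.W) - 1) = 2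
  rw [Fintype.card_sigma_of_card_eq_one rfl fun _ => hb,
    Fintype.card_sigma_of_card_eq_one rfl fun _ => b.card_W.trans hb]

/-- Each of the three elementary necklaces has `max_{r ∈ ℛ₂} ω(r) = 1`, i.e.
bubble dimension `d̃ = 1`. -/
theorem elemNecklace_bubbleDim (ℓ : Fin 3) :
    IsMaxOmega2 (elemNecklace ℓ) 1 ∧ HasBubbleDim (elemNecklace ℓ) 1 := by
  have hr₀ := (elemNecklace ℓ).isR2_oneLineGraph rfl (0 : Fin 2) (0 : Fin 2)
  have hmax : IsMaxOmega2 (elemNecklace ℓ) 1 :=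
    ⟨⟨_, hr₀, hr₀.omega_eq_one_of_elemNecklace⟩, fun _ hr => hr.omega_eq_one_of_elemNecklace.le⟩
  exact ⟨hmax, 1, hmax, rfl⟩
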